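/- For every t > 0, one has the identity (3/4)·t·F₂(t)·F₂''(t) + F₂'(t)·F₂''(t) − (1/4)·t·(F₂'(t))² = 0, where F₂' and F₂'' denote the first and second derivatives of F₂. (This says that the determinant of the matrix associated with the function M(x,y) = x^{3/2}F₂(y/x) vanishes identically, for the exponent p = 3/2, for which p(p−1) = 3/4 and (p−1)² = 1/4.) -/

import Mathlib

open Real

noncomputable section

/-- The function `F₂(y) = (1/√2)·(2 − √(1+y²))·√(1 + √(1+y²))`. -/
def F2 (y : ℝ) : ℝ :=
  (1 / Real.sqrt 2) * (2 - Real.sqrt (1 + y ^ 2)) * Real.sqrt (1 + Real.sqrt (1 + y ^ 2))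

def G (y : ℝ) : ℝ := -3 * y / (2 * Real.sqrt 2 * Real.sqrt (1 + Real.sqrt (1 + y ^ 2)))

def H (y : ℝ) : ℝ :=
  -3 * Real.sqrt (1 + Real.sqrt (1 + y ^ 2)) / (4 * Real.sqrt 2 * Real.sqrt (1 + y ^ 2))

lemma sqrt_aux (t : ℝ) :
    HasDerivAt (fun y : ℝ => Real.sqrt (1 + y ^ 2))
      (2 * t / (2 * Real.sqrt (1 + t ^ 2))) t := by
  have hs : (0:ℝ) < 1 + t ^ 2 := by positivity
  have h1 : HasDerivAt (fun y : ℝ => 1 + y ^ 2) (2 * t) t := by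
    simpa using (hasDerivAt_pow 2 t).const_add 1
  simpa using h1.sqrt hs.ne'

lemma sqrt_aux2 (t : ℝ) :
    HasDerivAt (fun y : ℝ => Real.sqrt (1 + Real.sqrt (1 + y ^ 2)))
      ((2 * t / (2 * Real.sqrt (1 + t ^ 2))) / (2 * Real.sqrt (1 + Real.sqrt (1 + t ^ 2)))) t := by
  have hs : (0:ℝ) < Real.sqrt (1 + t ^ 2) := Real.sqrt_pos.2 (by positivity)
  have h3 : HasDerivAt (fun y : ℝ => 1 + Real.sqrt (1 + y ^ 2))
      (2 * t / (2 * Real.sqrt (1 + t ^ 2))) t := (sqrt_aux t).const_add 1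
  have : (0:ℝ) < 1 + Real.sqrt (1 + t ^ 2) := by linarith
  simpa using h3.sqrt this.ne'

lemma F2_hasDerivAt (t : ℝ) : HasDerivAt F2 (G t) t := by
  set s := Real.sqrt (1 + t ^ 2) with hs_def
  set u := Real.sqrt (1 + s) with hu_def
  have hs : (0:ℝ) < s := Real.sqrt_pos.2 (by positivity)
  have hu : (0:ℝ) < u := Real.sqrt_pos.2 (by linarith)
  have ha : (0:ℝ) < Real.sqrt 2 := Real.sqrt_pos.2 (by norm_num)
  have hs2 : s ^ 2 = 1 + t ^ 2 := Real.sq_sqrt (by positivity)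
  have hu2 : u ^ 2 = 1 + s := Real.sq_sqrt (by linarith)
  have h5 : HasDerivAt (fun y : ℝ => 1 / Real.sqrt 2 * (2 - Real.sqrt (1 + y ^ 2)))
      (1 / Real.sqrt 2 * (-(2 * t / (2 * s)))) t := by
    have := ((sqrt_aux t).const_sub 2).const_mul (1 / Real.sqrt 2)
    simpa using this
  have h6 := h5.mul (sqrt_aux2 t)
  have hval : 1 / Real.sqrt 2 * (-(2 * t / (2 * s))) * u
      + 1 / Real.sqrt 2 * (2 - s) * (2 * t / (2 * s) / (2 * u)) = G t := by
    rw [G]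
    rw [← hs_def, ← hu_def]
    field_simp
    linear_combination (-2*t) * hu2
  rw [← hval]
  exact h6

lemma G_hasDerivAt (t : ℝ) : HasDerivAt G (H t) t := by
  set s := Real.sqrt (1 + t ^ 2) with hs_def
  set u := Real.sqrt (1 + s) with hu_def
  have hs : (0:ℝ) < s := Real.sqrt_pos.2 (by positivity)
  have hu : (0:ℝ) < u := Real.sqrt_pos.2 (by linarith)
  have ha : (0:ℝ) < Real.sqrt 2 := Real.sqrt_pos.2 (by norm_num)
  have hs2 : s ^ 2 = 1 + t ^ 2 := Real.sq_sqrt (by positivity)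
  have hu2 : u ^ 2 = 1 + s := Real.sq_sqrt (by linarith)
  have hn : HasDerivAt (fun y : ℝ => -3 * y) (-3) t := by
    simpa using (hasDerivAt_id t).const_mul (-3)
  have hd : HasDerivAt (fun y : ℝ => 2 * Real.sqrt 2 * Real.sqrt (1 + Real.sqrt (1 + y ^ 2)))
      (2 * Real.sqrt 2 * (2 * t / (2 * s) / (2 * u))) t :=
    (sqrt_aux2 t).const_mul (2 * Real.sqrt 2)
  have hdd : 2 * Real.sqrt 2 * u ≠ 0 := by positivity
  have h6 := hn.div hd hdd
  have hval : (-3 * (2 * Real.sqrt 2 * u) - -3 * t * (2 * Real.sqrt 2 * (2 * t / (2 * s) / (2 * u))))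
      / (2 * Real.sqrt 2 * u) ^ 2 = H t := by
    rw [H, ← hs_def, ← hu_def]
    field_simp
    linear_combination (4*u^2+4-4*s) * hu2 - 4 * hs2
  rw [← hval]
  exact h6

theorem F2_determinant_identity (t : ℝ) (ht : 0 < t) :
    3 / 4 * t * F2 t * deriv (deriv F2) t + deriv F2 t * deriv (deriv F2) t
      - 1 / 4 * t * deriv F2 t ^ 2 = 0 := by
  have hdF2 : deriv F2 = G := funext fun y => (F2_hasDerivAt y).deriv
  rw [hdF2, (G_hasDerivAt t).deriv]
  set s := Real.sqrt (1 + t ^ 2) with hs_def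
  set u := Real.sqrt (1 + s) with hu_def
  have hs : (0:ℝ) < s := Real.sqrt_pos.2 (by positivity)
  have hu : (0:ℝ) < u := Real.sqrt_pos.2 (by linarith)
  have ha : (0:ℝ) < Real.sqrt 2 := Real.sqrt_pos.2 (by norm_num)
  have hs2 : s ^ 2 = 1 + t ^ 2 := Real.sq_sqrt (by positivity)
  have hu2 : u ^ 2 = 1 + s := Real.sq_sqrt (by linarith)
  have ha2 : Real.sqrt 2 ^ 2 = 2 := Real.sq_sqrt (by norm_num)
  rw [F2, G, H, ← hs_def, ← hu_def]
  field_simp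
  linear_combination (72*t + (36*t*s-72*t)*(u^2+1+s)) * hu2 + (36*t*s) * hs2
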